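/- Let p and k be positive integers with p ≥ k + 1, let θ ≥ 0, and let Γ = M₁(θ) be the p×p symmetric matrix with 1's on the diagonal, θ in entries (j, k+1) and (k+1, j) for each j ∈ {1,…,k}, and 0's elsewhere. Let S = {1,…,k}. Then: (1) the incoherence parameter satisfies |||Γ_{S^cS}(Γ_{SS})^{−1}|||_∞ = kθ; (2) the minimum eigenvalue of Γ equals 1 − θ√k; and (3) the maximum eigenvalue of Γ equals 1 + θ√k. -/

import Mathlib

open scoped BigOperators

/-- The matrix `M₁(θ)`: `1`'s on the diagonal, `θ` in the first `k` entries of the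
`(k+1)`-st row and column (0-based index `k`), and `0`'s elsewhere. -/
noncomputable def M1 (p k : ℕ) (θ : ℝ) : Matrix (Fin p) (Fin p) ℝ :=
  Matrix.of fun i j =>
    if i = j then 1
    else if ((i : ℕ) < k ∧ (j : ℕ) = k) ∨ ((j : ℕ) < k ∧ (i : ℕ) = k) then θ
    else 0

/-- The ℓ_∞-operator norm of a matrix: the maximum absolute row sum. -/
noncomputable def matInf {m n : Type*} [Fintype m] [Fintype n] (M : Matrix m n ℝ) : ℝ :=
  ⨆ i, ∑ j, |M i j|

/-- The submatrix `Γ_{S^c S}` of `M₁(θ)`, with rows indexed by `S^c = {j : ¬ j < k}` and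
columns indexed by `S = {j : j < k}`. -/
noncomputable def M1ScS (p k : ℕ) (θ : ℝ) :
    Matrix {j : Fin p // ¬ (j : ℕ) < k} {j : Fin p // (j : ℕ) < k} ℝ :=
  (M1 p k θ).submatrix (fun i => (i : Fin p)) (fun j => (j : Fin p))

/-- The submatrix `Γ_{SS}` of `M₁(θ)`, with rows and columns indexed by `S = {j : j < k}`. -/
noncomputable def M1SS (p k : ℕ) (θ : ℝ) :
    Matrix {j : Fin p // (j : ℕ) < k} {j : Fin p // (j : ℕ) < k} ℝ :=
  (M1 p k θ).submatrix (fun i => (i : Fin p)) (fun j => (j : Fin p))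

/-! `M₁(θ) = I + θ (u eᵀ + e uᵀ)`, where `u` is the indicator vector of `S` and `e` the basis
vector of index `k + 1`. Hence `Γ_{SS} = I`, and `Γ_{S^cS}` has a single nonzero row, with `k`
entries `θ`. The quadratic form is `‖v‖² + 2θ ⟪u, v⟫ ⟪e, v⟫`. As `u ⊥ e`, only the component `w`
of `v` orthogonal to `e` pairs with `u`, so Cauchy–Schwarz and `2ab ≤ a² + b²` give
`|2 ⟪u, v⟫ ⟪e, v⟫| ≤ ‖u‖ (‖w‖² + ⟪e, v⟫²) = √k ‖v‖²`, with equality at `v = (u / ‖u‖ ± e) / √2`. -/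

open scoped RealInnerProductSpace

section RankTwoForm

variable {E : Type*} [NormedAddCommGroup E] [InnerProductSpace ℝ E] {u e : E}

theorem abs_two_mul_inner_mul_inner_le (hue : ⟪u, e⟫ = 0) (he : ‖e‖ = 1) (v : E) :
    |2 * ⟪u, v⟫ * ⟪e, v⟫| ≤ ‖u‖ * ‖v‖ ^ 2 := by
  set c := ⟪e, v⟫
  set w := v - c • e
  have hu_w : ⟪u, v⟫ = ⟪u, w⟫ := by simp [w, inner_sub_right, inner_smul_right, hue]
  have hpyth : ‖v‖ ^ 2 = ‖w‖ ^ 2 + c ^ 2 := by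
    have hwe : ⟪w, e⟫ = 0 := by
      simp [w, c, inner_sub_left, inner_smul_left, he, real_inner_comm]
    rw [show v = w + c • e by simp [w], norm_add_sq_real, inner_smul_right, hwe, norm_smul, he]
    simp
  calc |2 * ⟪u, v⟫ * c| = 2 * |⟪u, w⟫| * |c| := by rw [hu_w, abs_mul, abs_mul, abs_two]
    _ ≤ 2 * (‖u‖ * ‖w‖) * |c| := by gcongr; exact abs_real_inner_le_norm u w
    _ ≤ ‖u‖ * (‖w‖ ^ 2 + c ^ 2) := by
        nlinarith [norm_nonneg u, sq_nonneg (‖w‖ - |c|), sq_abs c]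
    _ = ‖u‖ * ‖v‖ ^ 2 := by rw [hpyth]

theorem exists_norm_eq_one_two_mul_inner_mul_inner_eq (hue : ⟪u, e⟫ = 0) (he : ‖e‖ = 1)
    {ε : ℝ} (hε : ε ^ 2 = 1) :
    ∃ v : E, ‖v‖ = 1 ∧ 2 * ⟪u, v⟫ * ⟪e, v⟫ = ε * ‖u‖ := by
  rcases eq_or_ne u 0 with rfl | hu
  · exact ⟨e, he, by simp⟩
  have hu' : ‖u‖ ≠ 0 := norm_ne_zero_iff.2 hu
  have h2 : √2 ^ 2 = 2 := Real.sq_sqrt zero_le_two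
  set w := ‖u‖⁻¹ • u + ε • e
  have hw : ‖w‖ = √2 := by
    rw [← Real.sqrt_sq (norm_nonneg w), norm_add_sq_real, inner_smul_left, inner_smul_right, hue,
      norm_smul, norm_smul, he, Real.norm_eq_abs, Real.norm_eq_abs, abs_inv, abs_norm,
      inv_mul_cancel₀ hu', mul_pow, sq_abs, hε]
    norm_num
  refine ⟨(√2)⁻¹ • w, ?_, ?_⟩
  · rw [norm_smul, hw, Real.norm_eq_abs, abs_inv, abs_of_pos (by positivity),
      inv_mul_cancel₀ (by positivity)]
  · simp only [w, inner_smul_right, inner_add_right, real_inner_self_eq_norm_sq, he, hue,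
      real_inner_comm u e]
    field_simp
    rw [h2]
    ring

variable {θ : ℝ}

theorem isLeast_one_add_mul_two_mul_inner_mul_inner (hue : ⟪u, e⟫ = 0) (he : ‖e‖ = 1)
    (hθ : 0 ≤ θ) :
    IsLeast {c : ℝ | ∃ v : E, ‖v‖ = 1 ∧ c = 1 + θ * (2 * ⟪u, v⟫ * ⟪e, v⟫)} (1 - θ * ‖u‖) := by
  refine ⟨?_, ?_⟩
  · obtain ⟨v, hv, hvε⟩ :=
      exists_norm_eq_one_two_mul_inner_mul_inner_eq hue he (ε := -1) (by norm_num)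
    exact ⟨v, hv, by rw [hvε]; ring⟩
  · rintro c ⟨v, hv, rfl⟩
    have hle := (abs_le.1 (abs_two_mul_inner_mul_inner_le hue he v)).1
    rw [hv, one_pow, mul_one] at hle
    nlinarith

theorem isGreatest_one_add_mul_two_mul_inner_mul_inner (hue : ⟪u, e⟫ = 0) (he : ‖e‖ = 1)
    (hθ : 0 ≤ θ) :
    IsGreatest {c : ℝ | ∃ v : E, ‖v‖ = 1 ∧ c = 1 + θ * (2 * ⟪u, v⟫ * ⟪e, v⟫)} (1 + θ * ‖u‖) := by
  refine ⟨?_, ?_⟩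
  · obtain ⟨v, hv, hvε⟩ :=
      exists_norm_eq_one_two_mul_inner_mul_inner_eq hue he (ε := 1) (by norm_num)
    exact ⟨v, hv, by rw [hvε]; ring⟩
  · rintro c ⟨v, hv, rfl⟩
    have hle := (abs_le.1 (abs_two_mul_inner_mul_inner_le hue he v)).2
    rw [hv, one_pow, mul_one] at hle
    nlinarith

end RankTwoForm

theorem matInf_eq_of_forall_le {m n : Type*} [Fintype m] [Fintype n] {M : Matrix m n ℝ} {c : ℝ}
    (hle : ∀ i, ∑ j, |M i j| ≤ c) (i₀ : m) (hi₀ : ∑ j, |M i₀ j| = c) : matInf M = c :=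
  have : Nonempty m := ⟨i₀⟩
  le_antisymm (ciSup_le hle) (hi₀ ▸ le_ciSup (Finite.bddAbove_range fun i => ∑ j, |M i j|) i₀)

section M1

variable {p k : ℕ}

theorem M1SS_eq_one (θ : ℝ) : M1SS p k θ = 1 := by
  ext i j
  simp only [M1SS, M1, Matrix.submatrix_apply, Matrix.of_apply, Matrix.one_apply, Subtype.ext_iff]
  have := i.2
  have := j.2
  split_ifs <;> first | rfl | omega

theorem M1ScS_apply (θ : ℝ) (i : {j : Fin p // ¬ (j : ℕ) < k}) (j : {j : Fin p // (j : ℕ) < k}) :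
    M1ScS p k θ i j = if ((i : Fin p) : ℕ) = k then θ else 0 := by
  simp only [M1ScS, M1, Matrix.submatrix_apply, Matrix.of_apply, Fin.ext_iff]
  have := i.2
  have := j.2
  split_ifs <;> first | rfl | omega

theorem sum_abs_M1ScS (hkp : k ≤ p) {θ : ℝ} (hθ : 0 ≤ θ) (i : {j : Fin p // ¬ (j : ℕ) < k}) :
    ∑ j, |M1ScS p k θ i j| = if ((i : Fin p) : ℕ) = k then k * θ else 0 := by
  simp only [M1ScS_apply, apply_ite abs, abs_of_nonneg hθ, abs_zero, Finset.sum_const,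
    Finset.card_univ, Fintype.card_subtype, Fin.card_filter_val_lt, min_eq_right hkp,
    nsmul_eq_mul, mul_ite, mul_zero]

theorem matInf_M1ScS (hkp : k < p) {θ : ℝ} (hθ : 0 ≤ θ) : matInf (M1ScS p k θ) = k * θ := by
  refine matInf_eq_of_forall_le (fun i => ?_) ⟨⟨k, hkp⟩, lt_irrefl k⟩ ?_
  · rw [sum_abs_M1ScS hkp.le hθ]
    split_ifs
    · rfl
    · positivity
  · rw [sum_abs_M1ScS hkp.le hθ, if_pos rfl]

def indS (p k : ℕ) : EuclideanSpace ℝ (Fin p) :=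
  WithLp.toLp 2 fun i => if (i : ℕ) < k then 1 else 0

theorem inner_indS (v : EuclideanSpace ℝ (Fin p)) :
    ⟪indS p k, v⟫ = ∑ i : Fin p, if (i : ℕ) < k then v i else 0 := by
  simp [indS, PiLp.inner_apply]

theorem norm_indS (hkp : k ≤ p) : ‖indS p k‖ = √k := by
  rw [← Real.sqrt_sq (norm_nonneg _), ← real_inner_self_eq_norm_sq, inner_indS]
  simp [indS, Finset.sum_ite, Finset.filter_filter, Fin.card_filter_val_lt, hkp]

theorem inner_indS_single (hkp : k < p) :
    ⟪indS p k, EuclideanSpace.single (⟨k, hkp⟩ : Fin p) 1⟫ = 0 := by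
  simp only [inner_indS, PiLp.single_apply]
  exact Finset.sum_eq_zero fun i _ => by split_ifs <;> simp_all [Fin.ext_iff]

theorem M1_apply (hkp : k < p) (θ : ℝ) (i j : Fin p) :
    M1 p k θ i j = (1 : Matrix (Fin p) (Fin p) ℝ) i j +
      θ * (indS p k i * EuclideanSpace.single ⟨k, hkp⟩ 1 j +
        EuclideanSpace.single ⟨k, hkp⟩ 1 i * indS p k j) := by
  simp only [M1, indS, Matrix.of_apply, Matrix.one_apply, PiLp.single_apply, Fin.ext_iff]
  split_ifs <;> first | omega | simp

theorem M1_quadratic_form (hkp : k < p) (θ : ℝ) (v : EuclideanSpace ℝ (Fin p)) :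
    ∑ i, ∑ j, v i * M1 p k θ i j * v j =
      ‖v‖ ^ 2 + θ * (2 * ⟪indS p k, v⟫ * ⟪EuclideanSpace.single ⟨k, hkp⟩ 1, v⟫) := by
  set u := indS p k
  set f : EuclideanSpace ℝ (Fin p) := EuclideanSpace.single ⟨k, hkp⟩ 1
  have hsplit : ∀ i j, v i * M1 p k θ i j * v j =
      v i * (1 : Matrix (Fin p) (Fin p) ℝ) i j * v j +
        θ * ((v i * u i) * (v j * f j)) + θ * ((v i * f i) * (v j * u j)) := by
    intro i j
    rw [M1_apply hkp]
    ring
  have hdiag : ∑ i, ∑ j, v i * (1 : Matrix (Fin p) (Fin p) ℝ) i j * v j = ‖v‖ ^ 2 := by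
    rw [EuclideanSpace.real_norm_sq_eq]
    simp [Matrix.one_apply, sq]
  simp only [hsplit, Finset.sum_add_distrib, ← Finset.mul_sum, ← Finset.sum_mul, hdiag,
    PiLp.inner_apply, RCLike.inner_apply, conj_trivial]
  ring

end M1

theorem M1_incoherence_eigenvalues (p k : ℕ) (hpk : k + 1 ≤ p) (θ : ℝ) (hθ : 0 ≤ θ) :
    matInf (M1ScS p k θ * (M1SS p k θ)⁻¹) = k * θ ∧
    IsLeast {c : ℝ | ∃ v : EuclideanSpace ℝ (Fin p), ‖v‖ = 1 ∧
        c = ∑ i, ∑ j, v i * M1 p k θ i j * v j}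
      (1 - θ * Real.sqrt k) ∧
    IsGreatest {c : ℝ | ∃ v : EuclideanSpace ℝ (Fin p), ‖v‖ = 1 ∧
        c = ∑ i, ∑ j, v i * M1 p k θ i j * v j}
      (1 + θ * Real.sqrt k) := by
  have hkp : k < p := hpk
  have hvalues : {c : ℝ | ∃ v : EuclideanSpace ℝ (Fin p), ‖v‖ = 1 ∧
      c = ∑ i, ∑ j, v i * M1 p k θ i j * v j} =
      {c : ℝ | ∃ v : EuclideanSpace ℝ (Fin p), ‖v‖ = 1 ∧ c = 1 + θ * (2 * ⟪indS p k, v⟫ *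
        ⟪EuclideanSpace.single ⟨k, hkp⟩ 1, v⟫)} := by
    ext c
    refine exists_congr fun v => and_congr_right fun hv => ?_
    rw [M1_quadratic_form hkp, hv, one_pow]
  have he : ‖EuclideanSpace.single (⟨k, hkp⟩ : Fin p) (1 : ℝ)‖ = 1 := by simp
  rw [M1SS_eq_one, inv_one, Matrix.mul_one, hvalues, ← norm_indS hkp.le]
  exact ⟨matInf_M1ScS hkp hθ,
    isLeast_one_add_mul_two_mul_inner_mul_inner (inner_indS_single hkp) he hθ,
    isGreatest_one_add_mul_two_mul_inner_mul_inner (inner_indS_single hkp) he hθ⟩
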